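/- arXiv:1501.07066 — 2 statements merged into one kernel-verified Lean document; each statement's English description precedes it below -/
import Mathlib

section
/- Let K be a field and A a finite-dimensional K-algebra. A cochain map p : X → Y of cochain complexes of A-modules indexed by ℤ has the right lifting property with respect to the inclusion ι_n : S^{n+1} → D^n for every n ∈ ℤ if and only if p is a quasi-isomorphism and p is surjective in every degree. -/
open CategoryTheory CategoryTheory.Limits

variable (A : Type) [Ring A]

/-- The cochain complex `S^n`, with `A` in degree `n`, `0` in all other degrees,
and all differentials equal to zero. -/
noncomputable def Scx (n : ℤ) : CochainComplex (ModuleCat A) ℤ where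
  X k := if k = n then ModuleCat.of A A else ModuleCat.of A PUnit
  d _ _ := 0
  shape _ _ _ := rfl
  d_comp_d' _ _ _ _ _ := by simp

/-- The cochain complex `D^n`, with `A` in degrees `n` and `n + 1`, `0` elsewhere,
whose only nonzero differential is the identity `A → A` from degree `n` to `n + 1`. -/
noncomputable def Dcx (n : ℤ) : CochainComplex (ModuleCat A) ℤ where
  X k := if k = n ∨ k = n + 1 then ModuleCat.of A A else ModuleCat.of A PUnit
  d i j :=
    if h : i = n ∧ j = n + 1 then
      eqToHom (by rw [if_pos (Or.inl h.1), if_pos (Or.inr h.2)])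
    else 0
  shape i j hij := dif_neg (fun h => hij (by rw [ComplexShape.up_Rel, h.1, h.2]))
  d_comp_d' i j k _ _ := by
    by_cases h2 : j = n ∧ k = n + 1
    · rw [dif_neg (fun h1 : i = n ∧ j = n + 1 => by omega)]
      simp
    · rw [dif_neg h2, comp_zero]

/-- The cochain map `ι_n : S^{n+1} → D^n`, the identity in degree `n + 1`
and zero elsewhere. -/
noncomputable def iotaMap (n : ℤ) : Scx A (n + 1) ⟶ Dcx A n where
  f k :=
    if h : k = n + 1 then
      eqToHom (by dsimp only [Scx, Dcx]; rw [if_pos h, if_pos (Or.inr h)])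
    else 0
  comm' i j hij := by
    dsimp only [Scx, Dcx]
    rw [zero_comp]
    by_cases h : i = n ∧ j = n + 1
    · simp [show ¬ i = n + 1 by omega]; exact zero_comp
    · rw [dif_neg h, comp_zero]

/-!
Maps out of `S^{n+1}` are the `(n+1)`-cocycles and maps out of `D^n` are the `n`-cochains
(`S^{n+1}` and `D^n` are isomorphic to the complexes `single` and `double (𝟙 A)`), so a lifting
problem of `ι_n` against `p` is a cocycle `x ∈ X^{n+1}` and a cochain `y ∈ Y^n` with
`p x = d y`, and a solution is some `z ∈ X^n` with `d z = x` and `p z = y`.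
Solving all of these problems is equivalent to `p` being surjective in every degree with an
acyclic kernel: solving `(0, d y)` gives a cocycle `z₁` with `p z₁ = d y`, and solving `(z₁, y)`
gives a preimage of `y`; solving `(x, 0)` for a cocycle `x ∈ ker p` shows acyclicity. For a degreewise surjective `p`, the long exact homology
sequence of `0 → ker p → X → Y → 0` shows that `ker p` is acyclic iff `p` is a
quasi-isomorphism.
-/

universe u v

open ZeroObject in
lemma CategoryTheory.ShortComplex.ShortExact.quasiIso_g_iff_acyclic_X₁ {C ι : Type*}
    [Category C] [Abelian C] {c : ComplexShape ι} {S : ShortComplex (HomologicalComplex C c)}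
    (hS : S.ShortExact) : _root_.QuasiIso S.g ↔ S.X₁.Acyclic := by
  refine ⟨hS.acyclic_X₁, fun h₁ => ?_⟩
  let φ : ShortComplex.mk (0 : 0 ⟶ S.X₂) (𝟙 S.X₂) (by simp) ⟶ S :=
    { τ₁ := 0, τ₂ := 𝟙 _, τ₃ := S.g }
  have hφ₁ : _root_.QuasiIso φ.τ₁ := (_root_.quasiIso_iff _).2 fun i =>
    (quasiIsoAt_iff_exactAt _ i (HomologicalComplex.acyclic_of_isZero _ (isZero_zero _) i)).2
      (h₁ i)
  exact HomologicalComplex.HomologySequence.quasiIso_τ₃ φ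
    (ShortExact.mk' ((ShortComplex.exact_iff_mono _ rfl).2 inferInstance) inferInstance
      inferInstance) hS hφ₁ inferInstance

namespace ModuleCat

variable {R : Type u} [Ring R]

noncomputable def homSelfEquiv (M : ModuleCat.{u} R) : (ModuleCat.of R R ⟶ M) ≃ M :=
  homEquiv.trans (LinearMap.ringLmapEquivSelf R ℤ M).toEquiv

lemma homSelfEquiv_comp {M N : ModuleCat.{u} R} (φ : ModuleCat.of R R ⟶ M) (f : M ⟶ N) :
    N.homSelfEquiv (φ ≫ f) = f (M.homSelfEquiv φ) := rfl

lemma comp_eq_iff_homSelfEquiv {M N : ModuleCat.{u} R} (φ : ModuleCat.of R R ⟶ M) (f : M ⟶ N)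
    (ψ : ModuleCat.of R R ⟶ N) : φ ≫ f = ψ ↔ f (M.homSelfEquiv φ) = N.homSelfEquiv ψ :=
  N.homSelfEquiv.injective.eq_iff.symm

end ModuleCat

namespace HomologicalComplex

section SphereToDisc

variable {C ι : Type*} [Category C] [HasZeroMorphisms C] [HasZeroObject C]
  {c : ComplexShape ι} {i₀ i₁ : ι} {hi : c.Rel i₀ i₁}

lemma doubleXIso₀_hom {X₀ X₁ : C} (f : X₀ ⟶ X₁) (hi : c.Rel i₀ i₁) :
    (doubleXIso₀ f hi).hom = eqToHom (by simp [double]) := rfl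

lemma doubleXIso₁_inv {X₀ X₁ : C} (f : X₀ ⟶ X₁) (hi : c.Rel i₀ i₁) (h : i₀ ≠ i₁) :
    (doubleXIso₁ f hi h).inv = eqToHom (by simp [double, h.symm]) := rfl

lemma from_double_id_hom_ext (h : i₀ ≠ i₁) {G : C} {K : HomologicalComplex C c}
    {φ φ' : double (𝟙 G) hi ⟶ K} (h₀ : φ.f i₀ = φ'.f i₀) : φ = φ' :=
  (evalCompCoyonedaCorepresentableByDoubleId hi h G).homEquiv.injective
    congr((doubleXIso₀ (𝟙 G) hi).inv ≫ $h₀)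

variable [DecidableEq ι]

variable (hi) (h : i₀ ≠ i₁) (G : C) in
noncomputable def sphereToDisc : (single C c i₁).obj G ⟶ double (𝟙 G) hi :=
  mkHomFromSingle (doubleXIso₁ _ hi h).inv
    (fun _ _ => by rw [double_d_eq_zero₀ _ _ _ _ h.symm, comp_zero])

variable {h : i₀ ≠ i₁} {G : C}

lemma sphereToDisc_comp_f {K : HomologicalComplex C c} (g : double (𝟙 G) hi ⟶ K) :
    (sphereToDisc hi h G ≫ g).f i₁ = (singleObjXSelf c i₁ G).hom ≫
      ((doubleXIso₀ (𝟙 G) hi).inv ≫ g.f i₀) ≫ K.d i₀ i₁ := by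
  simp [sphereToDisc, double_d _ _ h]

lemma hasLiftingProperty_sphereToDisc_iff {X Y : HomologicalComplex C c} (p : X ⟶ Y) :
    HasLiftingProperty (sphereToDisc hi h G) p ↔
      ∀ x : G ⟶ X.X i₁, (∀ k, c.Rel i₁ k → x ≫ X.d i₁ k = 0) → ∀ y : G ⟶ Y.X i₀,
        x ≫ p.f i₁ = y ≫ Y.d i₀ i₁ → ∃ z : G ⟶ X.X i₀, z ≫ X.d i₀ i₁ = x ∧ z ≫ p.f i₀ = y := by
  let disc {K : HomologicalComplex C c} (z : G ⟶ K.X i₀) : double (𝟙 G) hi ⟶ K :=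
    mkHomFromDouble hi h z (z ≫ K.d i₀ i₁) (by simp) (by simp)
  have disc_f {K : HomologicalComplex C c} (z : G ⟶ K.X i₀) :
      (doubleXIso₀ (𝟙 G) hi).inv ≫ (disc z).f i₀ = z := by simp [disc]
  constructor
  · intro _ x hx y hxy
    have sq : CommSq (mkHomFromSingle x hx) (sphereToDisc hi h G) p (disc y) := ⟨by
      ext
      rw [sphereToDisc_comp_f, disc_f, comp_f, mkHomFromSingle_f, Category.assoc, hxy]⟩
    refine ⟨(doubleXIso₀ (𝟙 G) hi).inv ≫ sq.lift.f i₀, ?_, ?_⟩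
    · have := congr(($(sq.fac_left)).f i₁)
      rwa [sphereToDisc_comp_f, mkHomFromSingle_f, cancel_epi] at this
    · rw [Category.assoc, ← comp_f, sq.fac_right, disc_f]
  · refine fun H => ⟨fun {f g} sq => ?_⟩
    obtain ⟨z, hz₁, hz₂⟩ := H ((singleObjXSelf c i₁ G).inv ≫ f.f i₁)
      (fun k hk => by rw [Category.assoc, f.comm, single_obj_d, zero_comp, comp_zero])
      ((doubleXIso₀ (𝟙 G) hi).inv ≫ g.f i₀) (by
        rw [Category.assoc, ← comp_f, sq.w, sphereToDisc_comp_f, Iso.inv_hom_id_assoc])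
    refine ⟨⟨⟨disc z, ?_, ?_⟩⟩⟩
    · ext
      rw [sphereToDisc_comp_f, disc_f, hz₁, Iso.hom_inv_id_assoc]
    · refine from_double_id_hom_ext h ?_
      rw [comp_f, ← cancel_epi (doubleXIso₀ (𝟙 G) hi).inv, reassoc_of% disc_f, hz₂]

end SphereToDisc

section ModuleCat

variable {R : Type u} [Ring R] {ι : Type*} {c : ComplexShape ι}

lemma hasLiftingProperty_sphereToDisc_moduleCat_iff [DecidableEq ι] {i₀ i₁ : ι}
    {hi : c.Rel i₀ i₁} {h : i₀ ≠ i₁} {X Y : HomologicalComplex (ModuleCat.{u} R) c}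
    (p : X ⟶ Y) :
    HasLiftingProperty (sphereToDisc hi h (ModuleCat.of R R)) p ↔
      ∀ (x : X.X i₁) (y : Y.X i₀), (∀ k, c.Rel i₁ k → X.d i₁ k x = 0) →
        p.f i₁ x = Y.d i₀ i₁ y → ∃ z, X.d i₀ i₁ z = x ∧ p.f i₀ z = y := by
  have comp_eq_zero_iff {M N : ModuleCat.{u} R} (φ : ModuleCat.of R R ⟶ M) (f : M ⟶ N) :
      φ ≫ f = 0 ↔ f (M.homSelfEquiv φ) = 0 := ModuleCat.comp_eq_iff_homSelfEquiv φ f 0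
  rw [hasLiftingProperty_sphereToDisc_iff, (X.X i₁).homSelfEquiv.forall_congr_left]
  refine forall_congr' fun x => ?_
  rw [forall_comm, (Y.X i₀).homSelfEquiv.forall_congr_left]
  refine forall_congr' fun y => ?_
  simp only [comp_eq_zero_iff, ModuleCat.comp_eq_iff_homSelfEquiv, ModuleCat.homSelfEquiv_comp,
    Equiv.apply_symm_apply, (X.X i₀).homSelfEquiv.exists_congr_left]

lemma moduleCat_d_comp_d_apply (K : HomologicalComplex (ModuleCat.{v} R) c) (i j k : ι)
    (x : K.X i) : K.d j k (K.d i j x) = 0 := by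
  rw [← ConcreteCategory.comp_apply, K.d_comp_d]
  rfl

lemma Hom.moduleCat_comm_apply {X Y : HomologicalComplex (ModuleCat.{v} R) c} (p : X ⟶ Y)
    (i j : ι) (x : X.X i) : p.f j (X.d i j x) = Y.d i j (p.f i x) := by
  rw [← ConcreteCategory.comp_apply, ← p.comm]
  rfl

variable {X Y : HomologicalComplex (ModuleCat.{v} R) c} (p : X ⟶ Y)

noncomputable def moduleCatKer : HomologicalComplex (ModuleCat.{v} R) c where
  X i := ModuleCat.of R (LinearMap.ker (p.f i).hom)
  d i j := ModuleCat.ofHom ((X.d i j).hom.restrict fun x (hx : p.f i x = 0) =>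
    show p.f j (X.d i j x) = 0 by rw [p.moduleCat_comm_apply, hx, map_zero])
  shape i j hij := by ext; simp [X.shape i j hij]
  d_comp_d' i j k _ _ := by
    ext x
    exact X.moduleCat_d_comp_d_apply i j k x.1

noncomputable def moduleCatKerι : moduleCatKer p ⟶ X where
  f i := ModuleCat.ofHom (LinearMap.ker (p.f i).hom).subtype

noncomputable def moduleCatKerShortComplex :
    ShortComplex (HomologicalComplex (ModuleCat.{v} R) c) :=
  ShortComplex.mk (moduleCatKerι p) p (by ext i x; exact x.2)

lemma quasiIso_iff_acyclic_moduleCatKer (hp : ∀ i, Function.Surjective (p.f i)) :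
    QuasiIso p ↔ (moduleCatKer p).Acyclic :=
  (shortExact_of_degreewise_shortExact (moduleCatKerShortComplex p)
    fun i => LinearMap.shortExact_shortComplexKer (hp i)).quasiIso_g_iff_acyclic_X₁

end ModuleCat

end HomologicalComplex

namespace CochainComplex

open HomologicalComplex

variable {R : Type u} [Ring R]

lemma moduleCat_acyclic_iff (K : CochainComplex (ModuleCat.{v} R) ℤ) :
    K.Acyclic ↔ ∀ n (x : K.X (n + 1)), K.d (n + 1) (n + 2) x = 0 → ∃ z, K.d n (n + 1) z = x := by
  refine (Equiv.subRight (1 : ℤ)).forall_congr_left.trans (forall_congr' fun n => ?_)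
  rw [Equiv.subRight_symm_apply, K.exactAt_iff' n (n + 1) (n + 2) (by simp) (by simp; ring),
    ShortComplex.moduleCat_exact_iff]
  rfl

variable {X Y : CochainComplex (ModuleCat.{v} R) ℤ} (p : X ⟶ Y)

lemma acyclic_moduleCatKer_iff : (moduleCatKer p).Acyclic ↔
    ∀ n (x : X.X (n + 1)), p.f (n + 1) x = 0 → X.d (n + 1) (n + 2) x = 0 →
      ∃ z, p.f n z = 0 ∧ X.d n (n + 1) z = x := by
  rw [moduleCat_acyclic_iff]
  refine forall_congr' fun n => ⟨fun H x hpx hdx => ?_, fun H ⟨x, hpx⟩ hdx => ?_⟩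
  · obtain ⟨⟨z, hpz⟩, hdz⟩ := H ⟨x, hpx⟩ (Subtype.ext hdx)
    exact ⟨z, hpz, congr_arg Subtype.val hdz⟩
  · obtain ⟨z, hpz, hdz⟩ := H x hpx (congr_arg Subtype.val hdx)
    exact ⟨⟨z, hpz⟩, Subtype.ext hdz⟩

lemma lift_iff_surjective_and_acyclic_moduleCatKer :
    (∀ n (x : X.X (n + 1)) (y : Y.X n), X.d (n + 1) (n + 2) x = 0 →
      p.f (n + 1) x = Y.d n (n + 1) y → ∃ z, X.d n (n + 1) z = x ∧ p.f n z = y) ↔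
    (∀ n, Function.Surjective (p.f n)) ∧ (moduleCatKer p).Acyclic := by
  rw [acyclic_moduleCatKer_iff]
  constructor
  · intro H
    refine ⟨fun n y => ?_, fun n x hpx hdx => ?_⟩
    · obtain ⟨z₁, hdz₁, hpz₁⟩ := H (n + 1) 0 (Y.d n (n + 1) y) (map_zero _)
        (by rw [map_zero, moduleCat_d_comp_d_apply])
      obtain ⟨z, -, hz⟩ := H n z₁ y (by rwa [show n + 2 = n + 1 + 1 by ring]) hpz₁
      exact ⟨z, hz⟩
    · obtain ⟨z, hdz, hpz⟩ := H n x 0 hdx (by rw [hpx, map_zero])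
      exact ⟨z, hpz, hdz⟩
  · rintro ⟨hs, hK⟩ n x y hdx hxy
    obtain ⟨w, rfl⟩ := hs n y
    obtain ⟨k, hpk, hdk⟩ := hK n (x - X.d n (n + 1) w)
      (by rw [map_sub, hxy, p.moduleCat_comm_apply, sub_self])
      (by rw [map_sub, hdx, moduleCat_d_comp_d_apply, sub_zero])
    exact ⟨w + k, by rw [map_add, hdk, add_sub_cancel], by rw [map_add, hpk, add_zero]⟩

end CochainComplex

open HomologicalComplex

lemma Scx.isZero_X {m k : ℤ} (h : k ≠ m) : IsZero ((Scx A m).X k) := by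
  dsimp only [Scx]
  rw [if_neg h]
  exact ModuleCat.isZero_of_subsingleton _

lemma Scx.X_self (m : ℤ) : (Scx A m).X m = ModuleCat.of A A := if_pos rfl

noncomputable def Scx.isoSingle (m : ℤ) :
    Scx A m ≅ (single (ModuleCat A) (ComplexShape.up ℤ) m).obj (ModuleCat.of A A) :=
  Hom.isoOfComponents
    (fun k => if h : k = m then eqToIso (by subst h; simp [Scx])
      else (Scx.isZero_X A h).iso (isZero_single_obj_X _ _ _ _ h))
    (fun i j _ => by simp [Scx])

lemma Scx.isoSingle_inv_f_self (m : ℤ) :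
    (Scx.isoSingle A m).inv.f m = eqToHom (by simp [Scx.X_self]) := by
  simp [Scx.isoSingle]

lemma Dcx.isZero_X {n k : ℤ} (h : ¬(k = n ∨ k = n + 1)) : IsZero ((Dcx A n).X k) := by
  dsimp only [Dcx]
  rw [if_neg h]
  exact ModuleCat.isZero_of_subsingleton _

lemma Dcx.X_self (n : ℤ) : (Dcx A n).X n = ModuleCat.of A A := if_pos (Or.inl rfl)

lemma Dcx.X_succ (n : ℤ) : (Dcx A n).X (n + 1) = ModuleCat.of A A := if_pos (Or.inr rfl)

lemma Dcx.d_self (n : ℤ) :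
    (Dcx A n).d n (n + 1) = eqToHom ((Dcx.X_self A n).trans (Dcx.X_succ A n).symm) :=
  dif_pos ⟨rfl, rfl⟩

noncomputable def Dcx.isoDouble (n : ℤ) :
    Dcx A n ≅ double (𝟙 (ModuleCat.of A A)) (show (ComplexShape.up ℤ).Rel n (n + 1) from rfl) :=
  Hom.isoOfComponents
    (fun k => if h : k = n ∨ k = n + 1 then
        eqToIso (by rcases h with rfl | rfl <;> simp [Dcx, double])
      else (Dcx.isZero_X A h).iso (isZero_double_X _ _ _ (by tauto) (by tauto)))
    (fun i j (hij : i + 1 = j) => by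
      subst hij
      by_cases hi : i = n
      · subst hi
        rw [dif_pos (Or.inl rfl), dif_pos (Or.inr rfl), double_d _ _ (by simp), Dcx.d_self,
          doubleXIso₀_hom, doubleXIso₁_inv]
        simp
      · rw [double_d_eq_zero₀ _ _ _ _ hi]
        simp [Dcx, hi])

lemma Dcx.isoDouble_hom_f_succ (n : ℤ) :
    (Dcx.isoDouble A n).hom.f (n + 1) = eqToHom (by simp [Dcx.X_succ, double]) := by
  dsimp only [Dcx.isoDouble, Hom.isoOfComponents]
  rw [dif_pos (Or.inr rfl), eqToIso.hom]

lemma iotaMap_f_succ (n : ℤ) :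
    (iotaMap A n).f (n + 1) = eqToHom ((Scx.X_self A _).trans (Dcx.X_succ A n).symm) :=
  dif_pos rfl

lemma iotaMap_comp_isoDouble (n : ℤ) :
    iotaMap A n ≫ (Dcx.isoDouble A n).hom =
      (Scx.isoSingle A (n + 1)).hom ≫ sphereToDisc _ (by simp) (ModuleCat.of A A) := by
  rw [← Iso.inv_comp_eq]
  apply from_single_hom_ext
  simp [Scx.isoSingle_inv_f_self, iotaMap_f_succ, Dcx.isoDouble_hom_f_succ, sphereToDisc,
    singleObjXSelf, singleObjXIsoOfEq, doubleXIso₁_inv]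

lemma hasLiftingProperty_iotaMap_iff {X Y : CochainComplex (ModuleCat A) ℤ} (p : X ⟶ Y)
    (n : ℤ) :
    HasLiftingProperty (iotaMap A n) p ↔
      ∀ (x : X.X (n + 1)) (y : Y.X n), X.d (n + 1) (n + 2) x = 0 →
        p.f (n + 1) x = Y.d n (n + 1) y → ∃ z, X.d n (n + 1) z = x ∧ p.f n z = y := by
  refine (HasLiftingProperty.iff_of_arrow_iso_left (i := iotaMap A n)
    (i' := sphereToDisc _ (by simp) (ModuleCat.of A A))
    (Arrow.isoMk (Scx.isoSingle A (n + 1)) (Dcx.isoDouble A n)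
      (iotaMap_comp_isoDouble A n).symm) p).trans ?_
  rw [hasLiftingProperty_sphereToDisc_moduleCat_iff]
  have hn : n + 1 + 1 = n + 2 := by ring
  simp [hn]

theorem rlp_wrt_sphere_disc_inclusions_iff_trivial_fibration
    {X Y : CochainComplex (ModuleCat A) ℤ} (p : X ⟶ Y) :
    (∀ n : ℤ, HasLiftingProperty (iotaMap A n) p) ↔
      (QuasiIso p ∧ ∀ n : ℤ, Function.Surjective (p.f n)) := by
  simp only [hasLiftingProperty_iotaMap_iff]
  rw [CochainComplex.lift_iff_surjective_and_acyclic_moduleCatKer, and_comm]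
  exact and_congr_left fun hs => (quasiIso_iff_acyclic_moduleCatKer p hs).symm
end

section
/- Let K be a field and A a finite-dimensional K-algebra. Let X be a cochain complex of A-modules indexed by ℤ which is bounded above (there exists N ∈ ℤ with X^n = 0 for all n > N) and such that X^n is a projective A-module for every n ∈ ℤ. Then the unique map 0 → X from the zero complex has the left lifting property with respect to every cochain map that is both a quasi-isomorphism and surjective in every degree; i.e. X is cofibrant in the projective model structure. -/
/-!
A bounded above complex of projectives is K-projective: every map from it to an acyclic complex
is null-homotopic. Given a square with `0 → X` on the left and a degreewise surjective
quasi-isomorphism `p` on the right, projectivity of each `X^n` gives degreewise lifts, and the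
failure of these to form a chain map is a `1`-cocycle from `X` to `ker p`. Since `ker p` is
acyclic by the long exact homology sequence, K-projectivity of `X` makes this cocycle a
coboundary, which is exactly what is needed to correct the degreewise lifts into a chain map.
-/

open CategoryTheory CategoryTheory.Limits ZeroObject

namespace CochainComplex

open HomComplex

variable {C : Type*} [Category* C] [Abelian C]

lemma IsKProjective.eq_δ_of_cocycle {K L : CochainComplex C ℤ} {n : ℤ}
    (z : Cocycle K L n) [K.IsKProjective] (hL : L.Acyclic) (m : ℤ) (hm : m + 1 = n) :
    ∃ α : Cochain K L m, δ m n α = z.1 := by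
  let φ : K⟦-n⟧ ⟶ L := (Cocycle.equivHom _ _).symm (z.leftShift (-n) 0 (by lia))
  obtain ⟨f, hf⟩ := Cochain.equivHomotopy _ _ (IsKProjective.homotopyZero φ hL)
  rw [Cochain.ofHom_zero, add_zero] at hf
  refine ⟨n.negOnePow • f.leftUnshift m (by lia), ?_⟩
  rw [δ_units_smul, Cochain.δ_leftUnshift _ m _ n 0 (by lia), ← hf]
  simp [φ, smul_smul]

lemma acyclic_kernel_of_quasiIso {K L : CochainComplex C ℤ} (p : K ⟶ L) [Epi p] [QuasiIso p] :
    (kernel p).Acyclic :=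
  ShortComplex.ShortExact.acyclic_X₁ { exact := ShortComplex.exact_kernel p }
    (inferInstanceAs (QuasiIso p))

lemma hasLiftingProperty_zero_of_isKProjective (X : CochainComplex C ℤ) [X.IsKProjective]
    [∀ n, Projective (X.X n)] {P Q : CochainComplex C ℤ} (p : P ⟶ Q) [∀ n, Epi (p.f n)]
    [QuasiIso p] :
    HasLiftingProperty (0 : (0 : CochainComplex C ℤ) ⟶ X) p where
  sq_hasLift {t b} sq := by
    have : Epi p := HomologicalComplex.epi_of_epi_f p inferInstance
    let hsq (n : ℤ) : (sq.map (HomologicalComplex.eval _ _ n)).LiftStruct :=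
      { l := (Projective.factorThru (b.f n) (p.f n) : X.X n ⟶ P.X n)
        fac_left := ((HomologicalComplex.eval C _ n).map_isZero (isZero_zero _)).eq_of_src _ _
        fac_right := Projective.factorThru_comp (b.f n) (p.f n) }
    obtain ⟨α, hα⟩ := IsKProjective.eq_δ_of_cocycle
      (Lifting.cocycle₁ sq hsq (CokernelCofork.IsColimit.ofId _ rfl) (kernelIsKernel p)
        (hι := kernel.condition p)) (acyclic_kernel_of_quasiIso p) 0 (zero_add 1)
    exact Lifting.hasLift sq hsq _ (kernelIsKernel p) α hα

end CochainComplex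

theorem cofibrant_of_bounded_above_degreewise_projective_general
    (A : Type) [Ring A]
    (X : CochainComplex (ModuleCat A) ℤ)
    (hbdd : ∃ N : ℤ, ∀ n : ℤ, n > N → IsZero (X.X n))
    (hproj : ∀ n : ℤ, Projective (X.X n)) :
    ∀ ⦃P Q : CochainComplex (ModuleCat A) ℤ⦄ (p : P ⟶ Q), QuasiIso p →
      (∀ n : ℤ, Function.Surjective (p.f n)) →
      HasLiftingProperty (0 : (0 : CochainComplex (ModuleCat A) ℤ) ⟶ X) p := by
  obtain ⟨N, hN⟩ := hbdd
  have : X.IsStrictlyLE N := (CochainComplex.isStrictlyLE_iff X N).2 hN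
  have := CochainComplex.isKProjective_of_projective X N
  intro P Q p _ hsurj
  have (n : ℤ) : Epi (p.f n) := (ModuleCat.epi_iff_surjective _).2 (hsurj n)
  exact CochainComplex.hasLiftingProperty_zero_of_isKProjective X p

/-- If a cochain complex `X` of modules over a finite-dimensional algebra `A` is
bounded above and each term `X^n` is a projective `A`-module, then `X` is cofibrant
in the projective model structure: the unique map `0 → X` has the left lifting
property with respect to every degreewise surjective quasi-isomorphism. -/
theorem cofibrant_of_bounded_above_degreewise_projective
    (K : Type) [Field K] (A : Type) [Ring A] [Algebra K A] [FiniteDimensional K A]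
    (X : CochainComplex (ModuleCat A) ℤ)
    (hbdd : ∃ N : ℤ, ∀ n : ℤ, n > N → IsZero (X.X n))
    (hproj : ∀ n : ℤ, Projective (X.X n)) :
    ∀ ⦃P Q : CochainComplex (ModuleCat A) ℤ⦄ (p : P ⟶ Q), QuasiIso p →
      (∀ n : ℤ, Function.Surjective (p.f n)) →
      HasLiftingProperty (0 : (0 : CochainComplex (ModuleCat A) ℤ) ⟶ X) p :=
  cofibrant_of_bounded_above_degreewise_projective_general A X hbdd hproj
end
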